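/- arXiv:2102.03492 — 2 statements merged into one kernel-verified Lean document; each statement's English description precedes it below -/
import Mathlib

section
/- Let X and Y be J-posets and let φ: Str X → Str Y be an isomorphism of posets. Let B ⊆ X₂ be finite and nonempty, and let (A,B) ∈ (Str X)_B with height_B(A,B) > 0. Writing φ(A,B) = (S,T), we have ℓ(S,T) = ℓ(A,B) and η(S,T) = η(A,B). -/
open Order Set

/-- The minimal upper bound set of `A`: the minimal elements of the set of upper bounds. -/
def mub (X : Type*) [PartialOrder X] (A : Set X) : Set X :=
  {x ∈ upperBounds A | ∀ y ∈ upperBounds A, ¬ y < x}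

/-- The set of elements of height `i` in `X`. -/
def level (X : Type*) [PartialOrder X] (i : ℕ) : Set X :=
  {x : X | Order.height x = (i : ℕ∞)}

/-- A J-poset: a countable poset with a unique minimal element satisfying (J1)-(J4). -/
structure IsJPoset (X : Type*) [PartialOrder X] : Prop where
  countable : Countable X
  uniqueMin : ∃! x : X, IsMin x
  dim2 : Order.krullDim X = 2
  mubFinite : ∀ A : Set X, A.Nonempty → (mub X A).Finite
  j2 : ∀ x ∈ level X 1, {z : X | x < z}.Infinite
  j3 : ∀ m ∈ level X 2, ∀ F : Set X, F ⊆ level X 1 → F.Finite →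
        ∃ K : Set X, K ⊆ level X 1 ∧ K.Finite ∧ Disjoint K F ∧ mub X K = {m}
  j4 : ∀ T : Set X, T ⊆ level X 2 → T.Finite → T.Nonempty →
        ∃ t ∈ level X 1, ∀ m ∈ T, t < m

/-- `(A, B)` is a member of `Str X`. -/
def StrMem (X : Type*) [PartialOrder X] (A B : Set X) : Prop :=
  A ⊆ level X 1 ∧ B ⊆ level X 2 ∧
  ((A.Finite ∧ A.Nonempty ∧ B.Finite ∧ B.Nonempty) ∨
    (∃ x, x ∈ level X 1 ∧ A = {x} ∧ B = {z ∈ level X 2 | x < z})) ∧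
  (∃ a ∈ A, ∀ b ∈ B, a < b)

/-- `(C, D)` dominates `(A, B)` via `W`. -/
def Dominates (X : Type*) [PartialOrder X] (C D A B W : Set X) : Prop :=
  A ⊂ C ∧ D ⊆ B ∧ W ⊆ C ∧ W.Nonempty ∧
  (∀ w ∈ W, ∀ d ∈ D, w < d) ∧
  (∀ a ∈ A, ∀ m : X, a < m → (∀ w ∈ W, w < m) → m ∈ D)

/-- The order on `Str X`: `(A,B) ≤ (C,D)`. -/
def StrLE (X : Type*) [PartialOrder X] (A B C D : Set X) : Prop :=
  (A = C ∧ B = D) ∨ ∃ W : Set X, Dominates X C D A B W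

/-- The strict order on `Str X`: `(A,B) < (C,D)`. -/
def StrLT (X : Type*) [PartialOrder X] (A B C D : Set X) : Prop :=
  StrLE X A B C D ∧ ¬(A = C ∧ B = D)

/-- `ℓ(A,B)`: the number of `a ∈ A` with `a < b` for all `b ∈ B`. -/
noncomputable def ell (X : Type*) [PartialOrder X] (A B : Set X) : ℕ :=
  {a ∈ A | ∀ b ∈ B, a < b}.ncard

/-- `η(A,B) = |A| - ℓ(A,B)`. -/
noncomputable def eta (X : Type*) [PartialOrder X] (A B : Set X) : ℕ :=
  A.ncard - ell X A B

/-- `Str X` as a type of pairs. -/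
abbrev Str (X : Type*) [PartialOrder X] := {p : Set X × Set X // StrMem X p.1 p.2}

def strLE {X : Type*} [PartialOrder X] (p q : Str X) : Prop :=
  StrLE X p.1.1 p.1.2 q.1.1 q.1.2

def strLT {X : Type*} [PartialOrder X] (p q : Str X) : Prop :=
  strLE p q ∧ p ≠ q

/-- Membership in `Str_F X`: members of `Str X` with both coordinates finite. -/
def StrFMem (X : Type*) [PartialOrder X] (A B : Set X) : Prop :=
  StrMem X A B ∧ A.Finite ∧ B.Finite

/-- `Str_F X` as a type of pairs. -/
abbrev StrF (X : Type*) [PartialOrder X] := {p : Set X × Set X // StrFMem X p.1 p.2}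

def strFLE {X : Type*} [PartialOrder X] (p q : StrF X) : Prop :=
  StrLE X p.1.1 p.1.2 q.1.1 q.1.2

/-- `K_{Str_F X}(z)`: all `(K, {b}) ∈ Str_F X` with `z ∈ K` and `mub K = {b}`. -/
def KSet (X : Type*) [PartialOrder X] (z : X) : Set (StrF X) :=
  {p | z ∈ p.1.1 ∧ ∃ b : X, p.1.2 = {b} ∧ mub X p.1.1 = {b}}

/-- The three-element poset `𝕀₂`: two incomparable minimal elements below one top element,
realized as the nonempty subsets of a two-element set ordered by inclusion. -/
abbrev I2 := {s : Set (Fin 2) // s.Nonempty}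

/-!
An isomorphism of `Str` preserves everything that is definable from the order alone. Two
elements have a common upper bound iff their second coordinates meet, and using (J3) to build
elements `(A ∪ K, {m})` far above a given one, the elements `q` that have the same common upper
bounds as `p` and lie below everything strictly above `p` turn out to be exactly those with
`q.2 = p.2` and `q.1 ⊆ p.1`. When `p` is not minimal, its minimal such `q` are the `({a}, p.2)`
with `a` below all of `p.2`, and its maximal proper ones are the `(p.1 \ {a}, p.2)`; counting
them recovers `ℓ(p)` and `|p.1|`, hence also `η(p)`.
-/

section RelationInvariants

variable {α β : Type*} {r : α → α → Prop} {s : β → β → Prop}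

def Compat (r : α → α → Prop) (u v : α) : Prop :=
  ∃ w, r u w ∧ r v w

def lowerFiber (r : α → α → Prop) (p : α) : Set α :=
  {q | (∀ z, Compat r z q ↔ Compat r z p) ∧ ∀ t, r p t → p ≠ t → r q t}

def fiberAtoms (r : α → α → Prop) (p : α) : Set α :=
  {q | q ∈ lowerFiber r p ∧ ∀ q' ∈ lowerFiber r p, q' ∈ lowerFiber r q → q' = q}

def fiberCoatoms (r : α → α → Prop) (p : α) : Set α :=
  {q | q ∈ lowerFiber r p ∧ q ≠ p ∧
    ∀ q' ∈ lowerFiber r p, q' ≠ p → q ∈ lowerFiber r q' → q' = q}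

namespace RelIso

variable (e : r ≃r s)

theorem compat_apply_iff {u v : α} : Compat s (e u) (e v) ↔ Compat r u v := by
  simp only [Compat, e.surjective.exists, e.map_rel_iff]

theorem apply_mem_lowerFiber_iff {p q : α} :
    e q ∈ lowerFiber s (e p) ↔ q ∈ lowerFiber r p := by
  simp only [lowerFiber, mem_ofPred_eq, e.surjective.forall, e.compat_apply_iff, e.map_rel_iff,
    e.injective.ne_iff]

theorem apply_mem_fiberAtoms_iff {p q : α} :
    e q ∈ fiberAtoms s (e p) ↔ q ∈ fiberAtoms r p := by
  simp only [fiberAtoms, mem_ofPred_eq, e.surjective.forall, e.apply_mem_lowerFiber_iff,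
    e.injective.eq_iff]

theorem apply_mem_fiberCoatoms_iff {p q : α} :
    e q ∈ fiberCoatoms s (e p) ↔ q ∈ fiberCoatoms r p := by
  simp only [fiberCoatoms, mem_ofPred_eq, e.surjective.forall, e.apply_mem_lowerFiber_iff,
    e.injective.ne_iff, e.injective.eq_iff]

theorem ncard_eq_of_apply_mem_iff {S : Set α} {T : Set β} (h : ∀ q, e q ∈ T ↔ q ∈ S) :
    T.ncard = S.ncard := by
  rw [show S = e ⁻¹' T from Set.ext fun q => (h q).symm,
    ncard_preimage_of_injective_subset_range e.injective (by simp [e.surjective.range_eq])]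

end RelIso

end RelationInvariants

theorem level_disjoint {X : Type*} [PartialOrder X] {i j : ℕ} (h : i ≠ j) :
    Disjoint (level X i) (level X j) :=
  disjoint_left.2 fun _ hi hj => h (by exact_mod_cast (hi.symm.trans hj : (i : ℕ∞) = j))

namespace IsJPoset

variable {X : Type*} [PartialOrder X]

theorem height_le_two (hX : IsJPoset X) (x : X) : height x ≤ 2 := by
  have h := height_le_krullDim x
  rw [hX.dim2] at h
  exact WithBot.coe_le_coe.1 h

theorem height_lt_height (hX : IsJPoset X) {x y : X} (h : x < y) : height x < height y :=
  height_strictMono h ((hX.height_le_two x).trans_lt (by decide))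

theorem isMax_of_mem_level_two (hX : IsJPoset X) {m : X} (hm : m ∈ level X 2) : IsMax m := by
  refine isMax_iff_forall_not_lt.2 fun u hmu => ?_
  have h := (hX.height_lt_height hmu).trans_le (hX.height_le_two u)
  simp_all [level]

theorem mem_level_two_of_lt (hX : IsJPoset X) {x z : X} (hx : x ∈ level X 1) (h : x < z) :
    z ∈ level X 2 := by
  have h1 : height x = 1 := by simpa [level] using hx
  have h2 : 1 + 1 ≤ height z := Order.add_one_le_of_lt (h1 ▸ hX.height_lt_height h)
  show height z = ((2 : ℕ) : ℕ∞)
  exact le_antisymm (hX.height_le_two z) h2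

theorem wellFoundedLT (hX : IsJPoset X) : WellFoundedLT X :=
  StrictMono.wellFoundedLT (f := height) fun _ _ h => hX.height_lt_height h

theorem upperBounds_eq_of_mub_eq (hX : IsJPoset X) {K : Set X} {m : X} (hm : m ∈ level X 2)
    (h : mub X K = {m}) : upperBounds K = {m} := by
  have hmK : m ∈ mub X K := h ▸ rfl
  refine subset_antisymm (fun u hu => ?_) (singleton_subset_iff.2 hmK.1)
  have := hX.wellFoundedLT
  obtain ⟨v, hvu, hv⟩ := exists_minimal_le_of_wellFoundedLT (· ∈ upperBounds K) u hu
  have hvm : v = m := by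
    rw [← mem_singleton_iff, ← h]
    exact ⟨hv.1, fun y hy hyv => (minimal_iff_forall_lt.1 hv).2 hyv hy⟩
  subst hvm
  exact le_antisymm (hX.isMax_of_mem_level_two hm hvu) hvu

theorem exists_upperBounds_eq_singleton (hX : IsJPoset X) {m : X} (hm : m ∈ level X 2)
    {F : Set X} (hF : F ⊆ level X 1) (hFf : F.Finite) :
    ∃ K ⊆ level X 1, K.Finite ∧ K.Nonempty ∧ Disjoint K F ∧ upperBounds K = {m} := by
  obtain ⟨K, hK1, hKf, hKF, hmub⟩ := hX.j3 m hm F hF hFf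
  refine ⟨K, hK1, hKf, nonempty_iff_ne_empty.2 ?_, hKF, hX.upperBounds_eq_of_mub_eq hm hmub⟩
  rintro rfl
  have hmin : IsMin m := isMin_iff_forall_not_lt.2 fun y =>
    (show m ∈ mub X ∅ from hmub ▸ rfl).2 y (by simp)
  simp [level, height_eq_zero.2 hmin] at hm

end IsJPoset

section Str

variable {X : Type*} [PartialOrder X]

namespace StrMem

variable {A B : Set X}

theorem finite_fst (h : StrMem X A B) : A.Finite := by
  rcases h.2.2.1 with ⟨hA, -⟩ | ⟨x, -, rfl, -⟩
  · exact hA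
  · exact finite_singleton x

theorem nonempty_fst (h : StrMem X A B) : A.Nonempty := by
  obtain ⟨a, ha, -⟩ := h.2.2.2
  exact ⟨a, ha⟩

theorem nonempty_snd (hX : IsJPoset X) (h : StrMem X A B) : B.Nonempty := by
  rcases h.2.2.1 with ⟨-, -, -, hB⟩ | ⟨x, hx, -, rfl⟩
  · exact hB
  · obtain ⟨z, hz⟩ := (hX.j2 x hx).nonempty
    exact ⟨z, hX.mem_level_two_of_lt hx hz, hz⟩

end StrMem

theorem Str.ext {p q : Str X} (h₁ : p.1.1 = q.1.1) (h₂ : p.1.2 = q.1.2) : p = q :=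
  Subtype.ext (Prod.ext h₁ h₂)

theorem strLE_refl (p : Str X) : strLE p p :=
  Or.inl ⟨rfl, rfl⟩

theorem strLE_antisymm {p q : Str X} (h₁ : strLE p q) (h₂ : strLE q p) : p = q := by
  rcases h₁ with ⟨e₁, e₂⟩ | ⟨W, hpq, -⟩
  · exact Str.ext e₁ e₂
  rcases h₂ with ⟨e₁, e₂⟩ | ⟨W', hqp, -⟩
  · exact (Str.ext e₁ e₂).symm
  exact absurd hqp.subset hpq.not_subset

theorem fst_subset_of_strLE {p q : Str X} (h : strLE p q) : p.1.1 ⊆ q.1.1 := by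
  rcases h with ⟨e, -⟩ | ⟨W, hpq, -⟩
  · exact e.subset
  · exact hpq.subset

theorem snd_subset_of_strLE {p q : Str X} (h : strLE p q) : q.1.2 ⊆ p.1.2 := by
  rcases h with ⟨-, e⟩ | ⟨W, -, hqp, -⟩
  · exact e.symm.subset
  · exact hqp

theorem snd_finite_of_strLT {p q : Str X} (h : strLT q p) : p.1.2.Finite := by
  rcases h with ⟨⟨e₁, e₂⟩ | ⟨W, hqp, -⟩, hne⟩
  · exact absurd (Str.ext e₁ e₂) hne
  rcases p.2.2.2.1 with ⟨-, -, hB, -⟩ | ⟨x, -, hA, -⟩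
  · exact hB
  · rw [hA, ssubset_singleton_iff] at hqp
    exact absurd hqp q.2.nonempty_fst.ne_empty

theorem IsJPoset.exists_strLT_snd_eq_singleton (hX : IsJPoset X) {m : X} (hm : m ∈ level X 2)
    {A F : Set X} (hA : A ⊆ level X 1) (hAf : A.Finite) (hF : F ⊆ level X 1) (hFf : F.Finite) :
    ∃ r : Str X, r.1.2 = {m} ∧ A ⊆ r.1.1 ∧ Disjoint (r.1.1 \ A) F ∧
      ∀ u : Str X, u.1.1 ⊆ A → m ∈ u.1.2 → strLT u r := by
  obtain ⟨K, hK1, hKf, ⟨k, hk⟩, hKAF, hKm⟩ :=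
    hX.exists_upperBounds_eq_singleton hm (union_subset hA hF) (hAf.union hFf)
  have hKlt : ∀ k ∈ K, k < m := fun k hk =>
    lt_of_le_of_ne ((hKm ▸ rfl : m ∈ upperBounds K) hk)
      ((level_disjoint (by decide)).ne_of_mem (hK1 hk) hm)
  have hkA : k ∉ A := fun h => disjoint_left.1 hKAF hk (Or.inl h)
  let r : Str X := ⟨(A ∪ K, {m}), union_subset hA hK1, singleton_subset_iff.2 hm,
    Or.inl ⟨hAf.union hKf, ⟨k, Or.inr hk⟩, finite_singleton m, singleton_nonempty m⟩,
    k, Or.inr hk, by simpa using hKlt k hk⟩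
  refine ⟨r, rfl, subset_union_left, ?_, fun u huA hmu =>
    ⟨Or.inr ⟨K, ?_, ?_, ?_, ⟨k, hk⟩, ?_, ?_⟩, ?_⟩⟩
  · rw [union_sdiff_left]
    exact (hKAF.mono_right subset_union_right).mono_left sdiff_subset
  · exact (ssubset_iff_of_subset (huA.trans subset_union_left)).2
      ⟨k, Or.inr hk, fun h => hkA (huA h)⟩
  · exact singleton_subset_iff.2 hmu
  · exact subset_union_right
  · intro w hw d hd
    exact (hd : d = m) ▸ hKlt w hw
  · intro _ _ m' _ hm'
    show m' ∈ ({m} : Set X)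
    rw [← hKm]
    exact fun w hw => (hm' w hw).le
  · rintro rfl
    exact hkA (huA (Or.inr hk))

theorem IsJPoset.compat_strLE_iff (hX : IsJPoset X) {u v : Str X} :
    Compat strLE u v ↔ (u.1.2 ∩ v.1.2).Nonempty := by
  constructor
  · rintro ⟨w, huw, hvw⟩
    exact (w.2.nonempty_snd hX).mono
      (subset_inter (snd_subset_of_strLE huw) (snd_subset_of_strLE hvw))
  · rintro ⟨m, hmu, hmv⟩
    obtain ⟨r, -, -, -, hr⟩ := hX.exists_strLT_snd_eq_singleton (u.2.2.1 hmu)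
      (union_subset u.2.1 v.2.1) (u.2.finite_fst.union v.2.finite_fst) (empty_subset _) finite_empty
    exact ⟨r, (hr u subset_union_left hmu).1, (hr v subset_union_right hmv).1⟩

theorem IsJPoset.snd_eq_of_forall_compat_iff (hX : IsJPoset X) {u v : Str X}
    (h : ∀ z, Compat strLE z u ↔ Compat strLE z v) : u.1.2 = v.1.2 := by
  have key : ∀ m ∈ level X 2, m ∈ u.1.2 ↔ m ∈ v.1.2 := fun m hm => by
    obtain ⟨r, hr, -⟩ := hX.exists_strLT_snd_eq_singleton hm (empty_subset _) finite_empty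
      (empty_subset _) finite_empty
    simpa [hX.compat_strLE_iff, hr] using h r
  ext m
  exact ⟨fun hmu => (key m (u.2.2.1 hmu)).1 hmu, fun hmv => (key m (v.2.2.1 hmv)).2 hmv⟩

theorem IsJPoset.mem_lowerFiber_iff (hX : IsJPoset X) {p q : Str X} :
    q ∈ lowerFiber strLE p ↔ q.1.2 = p.1.2 ∧ q.1.1 ⊆ p.1.1 := by
  constructor
  · rintro ⟨hcompat, hbelow⟩
    refine ⟨hX.snd_eq_of_forall_compat_iff hcompat, fun x hxq => ?_⟩
    -- `r` lies strictly above `p` and adds to `p.1` only points outside `q.1`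
    obtain ⟨m, hm⟩ := p.2.nonempty_snd hX
    obtain ⟨r, -, -, hdisj, hr⟩ := hX.exists_strLT_snd_eq_singleton (p.2.2.1 hm) p.2.1
      p.2.finite_fst q.2.1 q.2.finite_fst
    have hqr := fst_subset_of_strLE (hbelow r (hr p subset_rfl hm).1 (hr p subset_rfl hm).2)
    by_contra hxp
    exact disjoint_left.1 hdisj ⟨hqr hxq, hxp⟩ hxq
  · rintro ⟨h₂, h₁⟩
    refine ⟨fun z => by simp only [hX.compat_strLE_iff, h₂], fun r hpr hne => ?_⟩
    rcases hpr with ⟨e₁, e₂⟩ | ⟨W, hpr, hrp, hWr, hW, hWlt, hE3⟩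
    · exact absurd (Str.ext e₁ e₂) hne
    · exact Or.inr
        ⟨W, h₁.trans_ssubset hpr, h₂ ▸ hrp, hWr, hW, hWlt, fun a ha => hE3 a (h₁ ha)⟩

def ellSet (p : Str X) : Set X :=
  {a ∈ p.1.1 | ∀ b ∈ p.1.2, a < b}

theorem IsJPoset.ellSet_nontrivial (hX : IsJPoset X) {p q : Str X} (h : strLT q p) :
    (ellSet p).Nontrivial := by
  have hpf := snd_finite_of_strLT h
  rcases h with ⟨⟨e₁, e₂⟩ | ⟨W, hqp, hpq, hWp, -, hWlt, hE3⟩, hne⟩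
  · exact absurd (Str.ext e₁ e₂) hne
  obtain ⟨a, haq, halt⟩ := q.2.2.2.2
  have haL : a ∈ ellSet p := ⟨hqp.subset haq, fun b hb => halt b (hpq hb)⟩
  by_contra hL
  rw [not_nontrivial_iff] at hL
  -- then `W = {a}`, so (E3) puts every element above `a` into the finite set `p.2`, against (J2)
  refine hX.j2 a (q.2.1 haq) (hpf.subset fun m ham => hE3 a haq m ham fun w hw => ?_)
  rwa [hL ⟨hWp hw, hWlt w hw⟩ haL]

theorem IsJPoset.strMem_singleton (hX : IsJPoset X) {p : Str X} (hpf : p.1.2.Finite) {a : X}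
    (ha : a ∈ ellSet p) : StrMem X {a} p.1.2 :=
  ⟨singleton_subset_iff.2 (p.2.1 ha.1), p.2.2.1,
    Or.inl ⟨finite_singleton a, singleton_nonempty a, hpf, p.2.nonempty_snd hX⟩, a, rfl, ha.2⟩

theorem IsJPoset.strMem_diff_singleton (hX : IsJPoset X) {p : Str X} (hpf : p.1.2.Finite)
    (hL : (ellSet p).Nontrivial) (a : X) : StrMem X (p.1.1 \ {a}) p.1.2 := by
  obtain ⟨b, hb, hba⟩ := hL.exists_ne a
  have hb' : b ∈ p.1.1 \ {a} := ⟨hb.1, hba⟩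
  exact ⟨sdiff_subset.trans p.2.1, p.2.2.1,
    Or.inl ⟨p.2.finite_fst.sdiff, ⟨b, hb'⟩, hpf, p.2.nonempty_snd hX⟩, b, hb', hb.2⟩

theorem IsJPoset.mem_fiberAtoms_iff (hX : IsJPoset X) {p q : Str X} (hpf : p.1.2.Finite) :
    q ∈ fiberAtoms strLE p ↔
      ∃ a, ∃ ha : a ∈ ellSet p, q = ⟨({a}, p.1.2), hX.strMem_singleton hpf ha⟩ := by
  simp only [fiberAtoms, mem_ofPred_eq, hX.mem_lowerFiber_iff]
  constructor
  · rintro ⟨⟨hq₂, hq₁⟩, hmin⟩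
    obtain ⟨a, haq, ha⟩ := q.2.2.2.2
    have haL : a ∈ ellSet p := ⟨hq₁ haq, hq₂ ▸ ha⟩
    exact ⟨a, haL, (hmin ⟨({a}, p.1.2), hX.strMem_singleton hpf haL⟩
      ⟨rfl, singleton_subset_iff.2 haL.1⟩ ⟨hq₂.symm, singleton_subset_iff.2 haq⟩).symm⟩
  · rintro ⟨a, ha, rfl⟩
    refine ⟨⟨rfl, singleton_subset_iff.2 ha.1⟩, fun q' _ ⟨hq'₂, hq'₁⟩ => Str.ext ?_ hq'₂⟩
    exact (subset_singleton_iff_eq.1 hq'₁).resolve_left q'.2.nonempty_fst.ne_empty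

theorem IsJPoset.mem_fiberCoatoms_iff (hX : IsJPoset X) {p q : Str X} (hpf : p.1.2.Finite)
    (hL : (ellSet p).Nontrivial) :
    q ∈ fiberCoatoms strLE p ↔
      ∃ a ∈ p.1.1, q = ⟨(p.1.1 \ {a}, p.1.2), hX.strMem_diff_singleton hpf hL a⟩ := by
  simp only [fiberCoatoms, mem_ofPred_eq, hX.mem_lowerFiber_iff]
  constructor
  · rintro ⟨⟨hq₂, hq₁⟩, hqp, hmax⟩
    obtain ⟨a, hap, haq⟩ :=
      exists_of_ssubset (hq₁.ssubset_of_ne fun h => hqp (Str.ext h hq₂))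
    refine ⟨a, hap, (hmax ⟨(p.1.1 \ {a}, p.1.2), hX.strMem_diff_singleton hpf hL a⟩
      ⟨rfl, sdiff_subset⟩ (fun h => ?_) ⟨hq₂, fun x hx => ⟨hq₁ hx, ?_⟩⟩).symm⟩
    · exact (sdiff_singleton_ssubset.2 hap).ne (congrArg (·.1.1) h)
    · rintro rfl
      exact haq hx
  · rintro ⟨a, hap, rfl⟩
    refine ⟨⟨rfl, sdiff_subset⟩, fun h => ?_,
      fun q' ⟨hq'₂, hq'₁⟩ hq'p ⟨_, hq'⟩ => Str.ext ?_ hq'₂⟩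
    · exact (sdiff_singleton_ssubset.2 hap).ne (congrArg (·.1.1) h)
    · refine subset_antisymm (fun x hx => ⟨hq'₁ hx, ?_⟩) hq'
      rintro rfl
      refine hq'p (Str.ext (subset_antisymm hq'₁ fun y hy => ?_) hq'₂)
      by_cases hya : y = x
      · exact hya ▸ hx
      · exact hq' ⟨hy, hya⟩

theorem IsJPoset.ncard_fiberAtoms (hX : IsJPoset X) {p q : Str X} (h : strLT q p) :
    (fiberAtoms strLE p).ncard = ell X p.1.1 p.1.2 := by
  have hpf := snd_finite_of_strLT h
  refine (ncard_congr (fun a ha => ⟨({a}, p.1.2), hX.strMem_singleton hpf ha⟩)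
    (fun a ha => (hX.mem_fiberAtoms_iff hpf).2 ⟨a, ha, rfl⟩) (fun a b _ _ hab => ?_)
    fun q hq => ?_).symm
  · simpa using congrArg (fun t : Str X => t.1.1) hab
  · obtain ⟨a, ha, rfl⟩ := (hX.mem_fiberAtoms_iff hpf).1 hq
    exact ⟨a, ha, rfl⟩

theorem IsJPoset.ncard_fiberCoatoms (hX : IsJPoset X) {p q : Str X} (h : strLT q p) :
    (fiberCoatoms strLE p).ncard = p.1.1.ncard := by
  have hpf := snd_finite_of_strLT h
  have hL := hX.ellSet_nontrivial h
  refine (ncard_congr (fun a _ => ⟨(p.1.1 \ {a}, p.1.2), hX.strMem_diff_singleton hpf hL a⟩)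
    (fun a ha => (hX.mem_fiberCoatoms_iff hpf hL).2 ⟨a, ha, rfl⟩) (fun a b ha _ hab => ?_)
    fun q hq => ?_).symm
  · have hab : p.1.1 \ {a} = p.1.1 \ {b} := congrArg (fun t : Str X => t.1.1) hab
    by_contra hne
    exact (hab ▸ (⟨ha, hne⟩ : a ∈ p.1.1 \ {b}) : a ∈ p.1.1 \ {a}).2 rfl
  · obtain ⟨a, ha, rfl⟩ := (hX.mem_fiberCoatoms_iff hpf hL).1 hq
    exact ⟨a, ha, rfl⟩

end Str

theorem stmt_16_general {X Y : Type*} [PartialOrder X] [PartialOrder Y]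
    (hX : IsJPoset X) (hY : IsJPoset Y)
    (φ : Str X → Str Y) (hφsurj : Function.Surjective φ)
    (hφord : ∀ p q : Str X, strLE p q ↔ strLE (φ p) (φ q))
    (B : Set X)
    (p : Str X)
    (hpos : ∃ q : Str X, q.1.2 = B ∧ strLT q p) :
    ell Y (φ p).1.1 (φ p).1.2 = ell X p.1.1 p.1.2 ∧
    eta Y (φ p).1.1 (φ p).1.2 = eta X p.1.1 p.1.2 := by
  obtain ⟨q, -, hqp⟩ := hpos
  have hφinj : Function.Injective φ := fun a b h =>
    strLE_antisymm ((hφord a b).2 (h ▸ strLE_refl _)) ((hφord b a).2 (h ▸ strLE_refl _))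
  let e : (strLE : Str X → Str X → Prop) ≃r (strLE : Str Y → Str Y → Prop) :=
    ⟨Equiv.ofBijective φ ⟨hφinj, hφsurj⟩, (hφord _ _).symm⟩
  have hφqp : strLT (φ q) (φ p) := ⟨(hφord q p).1 hqp.1, hφinj.ne hqp.2⟩
  have hell : ell Y (φ p).1.1 (φ p).1.2 = ell X p.1.1 p.1.2 := by
    rw [← hY.ncard_fiberAtoms hφqp, ← hX.ncard_fiberAtoms hqp]
    exact e.ncard_eq_of_apply_mem_iff fun _ => e.apply_mem_fiberAtoms_iff
  have hcard : (φ p).1.1.ncard = p.1.1.ncard := by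
    rw [← hY.ncard_fiberCoatoms hφqp, ← hX.ncard_fiberCoatoms hqp]
    exact e.ncard_eq_of_apply_mem_iff fun _ => e.apply_mem_fiberCoatoms_iff
  exact ⟨hell, by rw [eta, eta, hell, hcard]⟩

/-- If `φ : Str X → Str Y` is an isomorphism, `B ⊆ X₂` is finite and nonempty,
and `(A,B) ∈ (Str X)_B` has height greater than `0` in `(Str X)_B`, then writing
`φ(A,B) = (S,T)` we have `ℓ(S,T) = ℓ(A,B)` and `η(S,T) = η(A,B)`. -/
theorem stmt_16 {X Y : Type*} [PartialOrder X] [PartialOrder Y]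
    (hX : IsJPoset X) (hY : IsJPoset Y)
    (φ : Str X → Str Y) (hφsurj : Function.Surjective φ)
    (hφord : ∀ p q : Str X, strLE p q ↔ strLE (φ p) (φ q))
    (B : Set X) (hB2 : B ⊆ level X 2) (hBf : B.Finite) (hBne : B.Nonempty)
    (p : Str X) (hpB : p.1.2 = B)
    (hpos : ∃ q : Str X, q.1.2 = B ∧ strLT q p) :
    ell Y (φ p).1.1 (φ p).1.2 = ell X p.1.1 p.1.2 ∧
    eta Y (φ p).1.1 (φ p).1.2 = eta X p.1.1 p.1.2 :=
  stmt_16_general hX hY φ hφsurj hφord B p hpos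
end

section
/- Let X and Y be J-posets, let ψ: Str_F X → Str_F Y be an isomorphism of posets, and let x ∈ X₁. For z ∈ X₁ let K_{Str_F X}(z) denote the set of all (K, {b}) ∈ Str_F X such that z ∈ K and mub(K) = {b}. Then there exists a unique y ∈ Y₁ such that ψ(K_{Str_F X}(x)) = K_{Str_F Y}(y). -/
/-!
Unwinding the definitions, `(A, B) < (C, D)` in `Str_F` holds iff `A ⊊ C`, `D ⊆ B` and `(C, D)`
has a base (`StrF.HasBase`). This makes the members of the sets `K(z)`, the peaks `(K, {b})` with
`mub K = {b}`, definable from the order alone (`IsPeakLike`): directedness above `q` detects a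
singleton second coordinate, compatibility detects a common top, and the minimal strict
predecessors of a peak in a suitable preorder are the pairs with a singleton first coordinate.
Moreover three peaks share a point of their first coordinates iff they have a common strict lower
bound. Hence `ψ` preserves peaks and this meeting relation.

Choose peaks `p₀`, `p₁` whose first coordinates meet exactly in `{x}`. Then `K(x)` is the set of
peaks meeting both, so its image is the set of peaks meeting `S`, the intersection of the first
coordinates of `ψ p₀` and `ψ p₁`. Any two members of the image meet, because their preimages share
`x`, whereas two distinct points of `Y₁` lie in disjoint peaks; so `S` is a single point `y`, and
`ψ(K(x)) = K(y)`. Uniqueness holds because a point of `Y₁` lies in a peak avoiding any other point.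
-/

open Order Set

section Levels

variable {Z : Type*} [PartialOrder Z]

lemma height_le_two (hdim : krullDim Z ≤ 2) (a : Z) : height a ≤ 2 :=
  WithBot.coe_le_coe.mp ((height_le_krullDim a).trans hdim)

lemma mem_level_two_of_lt (hdim : krullDim Z ≤ 2) {x z : Z} (hx : x ∈ level Z 1)
    (hxz : x < z) : z ∈ level Z 2 := by
  have h := height_add_one_le hxz
  rw [hx] at h
  exact le_antisymm (height_le_two hdim z) (by simpa [one_add_one_eq_two] using h)

lemma not_lt_of_mem_level_two (hdim : krullDim Z ≤ 2) {b z : Z} (hb : b ∈ level Z 2) :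
    ¬ b < z := fun h => by
  have := (height_add_one_le h).trans (height_le_two hdim z)
  rw [hb] at this
  norm_num at this

lemma ne_of_mem_level_one_of_mem_level_two {x b : Z} (hx : x ∈ level Z 1)
    (hb : b ∈ level Z 2) : x ≠ b := by
  rintro rfl
  have := hx.symm.trans hb
  norm_num at this

lemma eq_of_le_of_mem_level_one (hdim : krullDim Z ≤ 2) {x y : Z} (hx : x ∈ level Z 1)
    (hy : y ∈ level Z 1) (hxy : x ≤ y) : x = y :=
  hxy.eq_or_lt.resolve_right fun h =>
    ne_of_mem_level_one_of_mem_level_two hy (mem_level_two_of_lt hdim hx h) rfl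

lemma exists_lt_of_mem_level_two {b : Z} (hb : b ∈ level Z 2) : ∃ y, y < b := by
  refine not_isMin_iff.mp fun h => ?_
  have := hb.symm.trans (height_eq_zero.mpr h)
  norm_num at this

end Levels

section MinimalUpperBounds

variable {Z : Type*} [PartialOrder Z]

lemma mub_eq_singleton_of_upperBounds {K : Set Z} {b : Z} (h : upperBounds K = {b}) :
    mub Z K = {b} := by
  ext m
  simp only [mub, h, mem_singleton_iff, forall_eq, mem_ofPred_eq]
  exact ⟨And.left, fun hm => ⟨hm, hm ▸ lt_irrefl b⟩⟩

lemma upperBounds_eq_singleton_of_mub (hdim : krullDim Z ≤ 2) {K : Set Z} {b : Z}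
    (hK : K ⊆ level Z 1) (hb : b ∈ level Z 2) (hmub : mub Z K = {b}) :
    upperBounds K = {b} := by
  have hbK : b ∈ mub Z K := hmub ▸ rfl
  suffices h : upperBounds K ⊆ mub Z K from
    subset_antisymm (hmub ▸ h) (singleton_subset_iff.mpr hbK.1)
  intro m hm
  refine ⟨hm, fun y hy hym => ?_⟩
  obtain ⟨k, hk⟩ : K.Nonempty := by
    refine nonempty_iff_ne_empty.mpr ?_
    rintro rfl
    obtain ⟨y, hyb⟩ := exists_lt_of_mem_level_two hb
    exact hbK.2 y (by simp) hyb
  rcases (hy hk).lt_or_eq with hky | rfl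
  · exact not_lt_of_mem_level_two hdim (mem_level_two_of_lt hdim (hK hk) hky) hym
  · -- `k` itself is then a minimal upper bound of `K`
    have : k ∈ mub Z K := ⟨hy, fun u hu huk => (hu hk).not_gt huk⟩
    rw [hmub] at this
    exact ne_of_mem_level_one_of_mem_level_two (hK hk) hb this

lemma IsJPoset.exists_base (hZ : IsJPoset Z) {b : Z} (hb : b ∈ level Z 2) {F : Set Z}
    (hF : F ⊆ level Z 1) (hFfin : F.Finite) :
    ∃ K ⊆ level Z 1, K.Finite ∧ Disjoint K F ∧ K.Nonempty ∧ (∀ k ∈ K, k < b) ∧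
      ∀ m, (∀ k ∈ K, k < m) → m = b := by
  obtain ⟨K, hK, hKfin, hKF, hmub⟩ := hZ.j3 b hb F hF hFfin
  have hub := upperBounds_eq_singleton_of_mub hZ.dim2.le hK hb hmub
  have hlt : ∀ k ∈ K, k < b := fun k hk =>
    lt_of_le_of_ne ((hub.ge rfl) hk) (ne_of_mem_level_one_of_mem_level_two (hK hk) hb)
  refine ⟨K, hK, hKfin, hKF, ?_, hlt, fun m hm => hub.subset fun k hk => (hm k hk).le⟩
  refine nonempty_iff_ne_empty.mpr ?_
  rintro rfl
  obtain ⟨y, hyb⟩ := exists_lt_of_mem_level_two hb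
  exact hyb.ne (hub.subset (by simp))

end MinimalUpperBounds

section OrderInvariants

variable {α β : Type*} (R : α → α → Prop)

/- On `Str_F` these detect, respectively: a singleton second coordinate (`UpDirectedAt`), equal
singleton second coordinates (`Compatible`), inclusion of first coordinates (`Subordinate`), a
singleton first coordinate (`IsAtomOf`) and the peaks (`IsPeakLike`). -/

def StrictRel (a b : α) : Prop := R a b ∧ ¬ R b a

def UpDirectedAt (q : α) : Prop := ∀ u v, R q u → R q v → ∃ w, R u w ∧ R v w

def Compatible (p q : α) : Prop := ∃ u, R p u ∧ R q u

def Subordinate (q r s : α) : Prop :=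
  ∀ t, UpDirectedAt R t → Compatible R q t → StrictRel R s t → StrictRel R r t

def IsAtomOf (q s : α) : Prop :=
  StrictRel R s q ∧ ∀ r, StrictRel R r q → Subordinate R q r s → Subordinate R q s r

def IsPeakLike (q : α) : Prop :=
  (∃ s, StrictRel R s q) ∧ UpDirectedAt R q ∧
    ∀ t, UpDirectedAt R t → (∃ s, StrictRel R s t) → Compatible R q t →
      (∀ s, IsAtomOf R q s → StrictRel R s t) → R q t

variable {R} {S : β → β → Prop} {f : α → β}

lemma strictRel_iff_of_forall_iff (hf : ∀ a b, R a b ↔ S (f a) (f b)) (a b : α) :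
    StrictRel R a b ↔ StrictRel S (f a) (f b) := by
  simp only [StrictRel, hf]

lemma isPeakLike_iff_of_surjective (hsurj : Function.Surjective f)
    (hf : ∀ a b, R a b ↔ S (f a) (f b)) (q : α) : IsPeakLike R q ↔ IsPeakLike S (f q) := by
  simp only [IsPeakLike, IsAtomOf, Subordinate, Compatible, UpDirectedAt, StrictRel,
    hsurj.forall, hsurj.exists, hf]

end OrderInvariants

lemma strFMem_of_lt {Z : Type*} [PartialOrder Z] {A B : Set Z} (hA : A ⊆ level Z 1)
    (hB : B ⊆ level Z 2) (hAfin : A.Finite) (hBfin : B.Finite) (hBne : B.Nonempty) {a : Z}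
    (ha : a ∈ A) (hab : ∀ b ∈ B, a < b) : StrFMem Z A B :=
  ⟨⟨hA, hB, Or.inl ⟨hAfin, ⟨a, ha⟩, hBfin, hBne⟩, a, ha, hab⟩, hAfin, hBfin⟩

namespace StrF

variable {Z : Type*} [PartialOrder Z]

lemma fst_subset_level (p : StrF Z) : p.1.1 ⊆ level Z 1 := p.2.1.1

lemma snd_subset_level (p : StrF Z) : p.1.2 ⊆ level Z 2 := p.2.1.2.1

lemma fst_finite (p : StrF Z) : p.1.1.Finite := p.2.2.1

lemma snd_finite (p : StrF Z) : p.1.2.Finite := p.2.2.2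

lemma exists_lt_snd (p : StrF Z) : ∃ a ∈ p.1.1, ∀ b ∈ p.1.2, a < b := p.2.1.2.2.2

lemma fst_nonempty (p : StrF Z) : p.1.1.Nonempty :=
  let ⟨a, ha, _⟩ := p.exists_lt_snd
  ⟨a, ha⟩

lemma snd_nonempty (hZ : IsJPoset Z) (p : StrF Z) : p.1.2.Nonempty := by
  rcases p.2.1.2.2.1 with h | ⟨x, hx, -, hB⟩
  · exact h.2.2.2
  · obtain ⟨z, hz⟩ := (hZ.j2 x hx).nonempty
    exact hB ▸ ⟨z, mem_level_two_of_lt hZ.dim2.le hx hz, hz⟩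

/-- What is left of (E2) and (E3) once the element `a` of (E3) is absorbed into `W`. -/
def HasBase (q : StrF Z) : Prop :=
  ∃ W ⊆ q.1.1, W.Nonempty ∧ (∀ w ∈ W, ∀ d ∈ q.1.2, w < d) ∧
    ∀ m, (∀ w ∈ W, w < m) → m ∈ q.1.2

lemma strFLE_iff {p q : StrF Z} :
    strFLE p q ↔ p = q ∨ p.1.1 ⊂ q.1.1 ∧ q.1.2 ⊆ p.1.2 ∧ q.HasBase := by
  constructor
  · rintro (⟨h₁, h₂⟩ | ⟨W, hAC, hDB, hWC, hWne, hWD, hE3⟩)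
    · exact Or.inl (Subtype.ext (Prod.ext h₁ h₂))
    · obtain ⟨a, ha, hab⟩ := p.exists_lt_snd
      refine Or.inr ⟨hAC, hDB, insert a W, insert_subset (hAC.1 ha) hWC, insert_nonempty a W,
        ?_, fun m hm => hE3 a ha m (hm a (mem_insert a W)) fun w hw =>
          hm w (mem_insert_of_mem a hw)⟩
      rintro w (rfl | hw) d hd
      exacts [hab d (hDB hd), hWD w hw d hd]
  · rintro (rfl | ⟨hAC, hDB, W, hWC, hWne, hWD, hW⟩)
    · exact Or.inl ⟨rfl, rfl⟩
    · exact Or.inr ⟨W, hAC, hDB, hWC, hWne, hWD, fun _ _ m _ hm => hW m hm⟩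

lemma fst_subset_of_strFLE {p q : StrF Z} (h : strFLE p q) : p.1.1 ⊆ q.1.1 := by
  rcases strFLE_iff.mp h with rfl | ⟨h, -⟩
  exacts [subset_rfl, h.subset]

lemma snd_subset_of_strFLE {p q : StrF Z} (h : strFLE p q) : q.1.2 ⊆ p.1.2 := by
  rcases strFLE_iff.mp h with rfl | ⟨-, h, -⟩
  exacts [subset_rfl, h]

lemma strFLE_antisymm {p q : StrF Z} (h₁ : strFLE p q) (h₂ : strFLE q p) : p = q :=
  (strFLE_iff.mp h₁).resolve_right fun h => h.1.2 (fst_subset_of_strFLE h₂)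

lemma injective_of_forall_strFLE_iff {Y : Type*} [PartialOrder Y] {ψ : StrF Z → StrF Y}
    (hψ : ∀ p q, strFLE p q ↔ strFLE (ψ p) (ψ q)) : Function.Injective ψ := fun p q h =>
  strFLE_antisymm ((hψ p q).mpr (h ▸ Or.inl ⟨rfl, rfl⟩)) ((hψ q p).mpr (h ▸ Or.inl ⟨rfl, rfl⟩))

lemma strictRel_iff {p q : StrF Z} :
    StrictRel strFLE p q ↔ p.1.1 ⊂ q.1.1 ∧ q.1.2 ⊆ p.1.2 ∧ q.HasBase := by
  refine ⟨fun ⟨h, hn⟩ => (strFLE_iff.mp h).resolve_left ?_, fun h =>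
    ⟨strFLE_iff.mpr (Or.inr h), fun h' => h.1.2 (fst_subset_of_strFLE h')⟩⟩
  rintro rfl
  exact hn h

lemma snd_eq_of_strFLE (hZ : IsJPoset Z) {p q : StrF Z} {b : Z} (h : strFLE p q)
    (hp : p.1.2 = {b}) : q.1.2 = {b} :=
  (q.snd_nonempty hZ).subset_singleton_iff.mp (hp ▸ snd_subset_of_strFLE h)

lemma HasBase.fst_ne_singleton (hZ : IsJPoset Z) {q : StrF Z} (hq : q.HasBase) (a : Z) :
    q.1.1 ≠ {a} := by
  intro hA
  obtain ⟨W, hWA, hWne, -, hWB⟩ := hq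
  have hW : W = {a} := hWne.subset_singleton_iff.mp (hA ▸ hWA)
  refine hZ.j2 a (q.fst_subset_level (hA ▸ rfl)) (q.snd_finite.subset fun m hm => hWB m ?_)
  rintro w hw
  exact (hW ▸ hw : w ∈ ({a} : Set Z)) ▸ hm

lemma HasBase.singleton_ssubset (hZ : IsJPoset Z) {q : StrF Z} (hq : q.HasBase) {a : Z}
    (ha : a ∈ q.1.1) : {a} ⊂ q.1.1 :=
  (singleton_subset_iff.mpr ha).ssubset_of_ne (hq.fst_ne_singleton hZ a).symm

lemma exists_strictRel_iff_hasBase (hZ : IsJPoset Z) (q : StrF Z) :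
    (∃ s, StrictRel strFLE s q) ↔ q.HasBase := by
  refine ⟨fun ⟨s, hs⟩ => (strictRel_iff.mp hs).2.2, fun hq => ?_⟩
  obtain ⟨W, hWA, ⟨a, ha⟩, hWB, -⟩ := id hq
  refine ⟨⟨({a}, q.1.2), strFMem_of_lt (singleton_subset_iff.mpr (q.fst_subset_level (hWA ha)))
    q.snd_subset_level (finite_singleton a) q.snd_finite (q.snd_nonempty hZ) rfl (hWB a ha)⟩,
    strictRel_iff.mpr ⟨hq.singleton_ssubset hZ (hWA ha), subset_rfl, hq⟩⟩

lemma exists_union_hasBase (hZ : IsJPoset Z) {A F : Set Z} (hA : A ⊆ level Z 1)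
    (hAfin : A.Finite) {b : Z} (hb : b ∈ level Z 2) (hF : F ⊆ level Z 1) (hFfin : F.Finite) :
    ∃ q : StrF Z, q.1.2 = {b} ∧ q.HasBase ∧
      ∃ K, q.1.1 = A ∪ K ∧ K.Nonempty ∧ Disjoint K F ∧ ∀ k ∈ K, k < b := by
  obtain ⟨K, hK, hKfin, hKF, ⟨k, hk⟩, hKb, hKub⟩ := hZ.exists_base hb hF hFfin
  refine ⟨⟨(A ∪ K, {b}), strFMem_of_lt (union_subset hA hK) (singleton_subset_iff.mpr hb)
    (hAfin.union hKfin) (finite_singleton b) (singleton_nonempty b) (mem_union_right A hk)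
    fun d hd => (mem_singleton_iff.mp hd) ▸ hKb k hk⟩, rfl,
    ⟨K, subset_union_right, ⟨k, hk⟩, fun w hw d hd => (mem_singleton_iff.mp hd) ▸ hKb w hw,
      hKub⟩, K, rfl, ⟨k, hk⟩, hKF, hKb⟩

lemma exists_common_strictRel (hZ : IsJPoset Z) {u v : StrF Z} {b : Z} (hu : b ∈ u.1.2)
    (hv : b ∈ v.1.2) : ∃ w, w.1.2 = {b} ∧ StrictRel strFLE u w ∧ StrictRel strFLE v w := by
  have huv := union_subset u.fst_subset_level v.fst_subset_level
  have huvfin := u.fst_finite.union v.fst_finite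
  obtain ⟨w, hw, hbase, K, hA, ⟨k, hk⟩, hKF, -⟩ :=
    exists_union_hasBase hZ huv huvfin (u.snd_subset_level hu) huv huvfin
  have hk' : k ∉ u.1.1 ∪ v.1.1 := disjoint_left.mp hKF hk
  refine ⟨w, hw, strictRel_iff.mpr ⟨?_, hw ▸ singleton_subset_iff.mpr hu, hbase⟩,
    strictRel_iff.mpr ⟨?_, hw ▸ singleton_subset_iff.mpr hv, hbase⟩⟩ <;> rw [hA]
  · exact ⟨subset_union_left.trans subset_union_left, fun h => hk' (Or.inl (h (Or.inr hk)))⟩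
  · exact ⟨subset_union_right.trans subset_union_left, fun h => hk' (Or.inr (h (Or.inr hk)))⟩

lemma upDirectedAt_iff (hZ : IsJPoset Z) (q : StrF Z) :
    UpDirectedAt strFLE q ↔ ∃ b, q.1.2 = {b} := by
  constructor
  · intro hq
    obtain ⟨b, hb⟩ := q.snd_nonempty hZ
    refine ⟨b, (q.snd_nonempty hZ).subset_singleton_iff.mp fun d hd => ?_⟩
    obtain ⟨u, hu, hqu, -⟩ := exists_common_strictRel hZ hb hb
    obtain ⟨v, hv, hqv, -⟩ := exists_common_strictRel hZ hd hd
    obtain ⟨w, huw, hvw⟩ := hq u v hqu.1 hqv.1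
    exact singleton_injective ((snd_eq_of_strFLE hZ hvw hv).symm.trans (snd_eq_of_strFLE hZ huw hu))
  · rintro ⟨b, hb⟩ u v hqu hqv
    obtain ⟨w, -, huw, hvw⟩ := exists_common_strictRel hZ
      ((snd_eq_of_strFLE hZ hqu hb).ge rfl) ((snd_eq_of_strFLE hZ hqv hb).ge rfl)
    exact ⟨w, huw.1, hvw.1⟩

lemma compatible_iff (hZ : IsJPoset Z) {p q : StrF Z} {b b' : Z} (hp : p.1.2 = {b})
    (hq : q.1.2 = {b'}) : Compatible strFLE p q ↔ b = b' := by
  constructor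
  · rintro ⟨u, hpu, hqu⟩
    exact singleton_injective ((snd_eq_of_strFLE hZ hpu hp).symm.trans (snd_eq_of_strFLE hZ hqu hq))
  · rintro rfl
    obtain ⟨w, -, hpw, hqw⟩ := exists_common_strictRel hZ (hp.ge rfl) (hq.ge rfl)
    exact ⟨w, hpw.1, hqw.1⟩

end StrF

namespace StrF

variable {Z : Type*} [PartialOrder Z]

lemma subordinate_iff (hZ : IsJPoset Z) {q r s : StrF Z} {b : Z} (hq : q.1.2 = {b})
    (hr : b ∈ r.1.2) (hs : b ∈ s.1.2) : Subordinate strFLE q r s ↔ r.1.1 ⊆ s.1.1 := by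
  constructor
  · intro h
    obtain ⟨t, ht, hbase, K, hA, ⟨k, hk⟩, hKF, -⟩ :=
      exists_union_hasBase hZ s.fst_subset_level s.fst_finite (s.snd_subset_level hs)
        (union_subset s.fst_subset_level r.fst_subset_level) (s.fst_finite.union r.fst_finite)
    have hst : StrictRel strFLE s t := strictRel_iff.mpr ⟨hA ▸ ⟨subset_union_left,
      fun h' => disjoint_left.mp hKF hk (Or.inl (h' (Or.inr hk)))⟩,
      ht ▸ singleton_subset_iff.mpr hs, hbase⟩
    have hrt := strictRel_iff.mp
      (h t ((upDirectedAt_iff hZ t).mpr ⟨b, ht⟩) ((compatible_iff hZ hq ht).mpr rfl) hst)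
    intro a ha
    rcases hA ▸ hrt.1.1 ha with h | h
    exacts [h, absurd (Or.inr ha) (disjoint_left.mp hKF h)]
  · intro hrs t ht hqt hst
    obtain ⟨b', hb'⟩ := (upDirectedAt_iff hZ t).mp ht
    obtain rfl := (compatible_iff hZ hq hb').mp hqt
    obtain ⟨⟨hst₁, hst₂⟩, -, hbase⟩ := strictRel_iff.mp hst
    exact strictRel_iff.mpr ⟨⟨hrs.trans hst₁, fun h => hst₂ (h.trans hrs)⟩,
      hb' ▸ singleton_subset_iff.mpr hr, hbase⟩

lemma isAtomOf_iff (hZ : IsJPoset Z) {q s : StrF Z} {b : Z} (hq : q.1.2 = {b}) :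
    IsAtomOf strFLE q s ↔ StrictRel strFLE s q ∧ ∃ a, s.1.1 = {a} := by
  have mem_snd : ∀ {r}, StrictRel strFLE r q → b ∈ r.1.2 := fun hr =>
    (strictRel_iff.mp hr).2.1 (hq.ge rfl)
  constructor
  · rintro ⟨hsq, hmin⟩
    obtain ⟨a, ha, hab⟩ := s.exists_lt_snd
    let r : StrF Z := ⟨({a}, s.1.2), strFMem_of_lt
      (singleton_subset_iff.mpr (s.fst_subset_level ha)) s.snd_subset_level (finite_singleton a)
      s.snd_finite (s.snd_nonempty hZ) rfl hab⟩
    obtain ⟨hsq₁, hsq₂, hbase⟩ := strictRel_iff.mp hsq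
    have hrq : StrictRel strFLE r q :=
      strictRel_iff.mpr ⟨(singleton_subset_iff.mpr ha).trans_ssubset hsq₁, hsq₂, hbase⟩
    have hrs := (subordinate_iff hZ hq (mem_snd hrq) (mem_snd hsq)).mpr
      (singleton_subset_iff.mpr ha)
    exact ⟨hsq, a, subset_antisymm ((subordinate_iff hZ hq (mem_snd hsq) (mem_snd hrq)).mp
      (hmin r hrq hrs)) (singleton_subset_iff.mpr ha)⟩
  · rintro ⟨hsq, a, hsa⟩
    refine ⟨hsq, fun r hrq hrs => (subordinate_iff hZ hq (mem_snd hsq) (mem_snd hrq)).mpr ?_⟩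
    have hra := (subordinate_iff hZ hq (mem_snd hrq) (mem_snd hsq)).mp hrs
    rw [hsa] at hra ⊢
    exact (r.fst_nonempty.subset_singleton_iff.mp hra).ge

def IsPeak (p : StrF Z) : Prop := ∃ b, p.1.2 = {b} ∧ mub Z p.1.1 = {b}

lemma mem_KSet_iff {z : Z} {p : StrF Z} : p ∈ KSet Z z ↔ z ∈ p.1.1 ∧ p.IsPeak := Iff.rfl

lemma isPeak_iff (hZ : IsJPoset Z) (q : StrF Z) :
    q.IsPeak ↔ ∃ b, q.1.2 = {b} ∧ q.HasBase ∧ ∀ a ∈ q.1.1, a < b := by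
  constructor
  · rintro ⟨b, hq, hmub⟩
    have hb : b ∈ level Z 2 := q.snd_subset_level (hq.ge rfl)
    have hub := upperBounds_eq_singleton_of_mub hZ.dim2.le q.fst_subset_level hb hmub
    have hlt : ∀ a ∈ q.1.1, a < b := fun a ha => lt_of_le_of_ne ((hub.ge rfl) ha)
      (ne_of_mem_level_one_of_mem_level_two (q.fst_subset_level ha) hb)
    refine ⟨b, hq, ⟨q.1.1, subset_rfl, q.fst_nonempty, fun w hw d hd => ?_,
      fun m hm => hq ▸ hub.subset fun a ha => (hm a ha).le⟩, hlt⟩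
    rw [hq, mem_singleton_iff] at hd
    exact hd ▸ hlt w hw
  · rintro ⟨b, hq, hbase, hlt⟩
    refine ⟨b, hq, mub_eq_singleton_of_upperBounds (subset_antisymm (fun m hm => ?_)
      (singleton_subset_iff.mpr fun a ha => (hlt a ha).le))⟩
    obtain ⟨W, hWA, -, -, hW⟩ := id hbase
    by_cases hmA : m ∈ q.1.1
    · -- level-one elements are pairwise incomparable, so `q.1.1 = {m}`
      refine absurd (eq_singleton_iff_unique_mem.mpr ⟨hmA, fun a ha => ?_⟩)
        (hbase.fst_ne_singleton hZ m)
      exact eq_of_le_of_mem_level_one hZ.dim2.le (q.fst_subset_level ha)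
        (q.fst_subset_level hmA) (hm ha)
    · exact hq ▸ hW m fun w hw => lt_of_le_of_ne (hm (hWA hw)) fun h => hmA (h ▸ hWA hw)

lemma isPeakLike_iff_isPeak (hZ : IsJPoset Z) (q : StrF Z) :
    IsPeakLike strFLE q ↔ q.IsPeak := by
  rw [isPeak_iff hZ]
  constructor
  · rintro ⟨hmin, hdir, hmax⟩
    have hbase := (exists_strictRel_iff_hasBase hZ q).mp hmin
    obtain ⟨b, hq⟩ := (upDirectedAt_iff hZ q).mp hdir
    refine ⟨b, hq, hbase, ?_⟩
    by_contra! ⟨c, hc, hcb⟩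
    -- `t` lies strictly above every atom of `q` but misses `c`
    obtain ⟨t, ht, htbase, K, hA, ⟨k, hk⟩, hKF, -⟩ :=
      exists_union_hasBase hZ (A := {a ∈ q.1.1 | a < b}) (fun a ha => q.fst_subset_level ha.1)
        (q.fst_finite.subset (sep_subset _ _)) (q.snd_subset_level (hq.ge rfl)) q.fst_subset_level
        q.fst_finite
    have hatoms : ∀ s, IsAtomOf strFLE q s → StrictRel strFLE s t := by
      intro s hs
      obtain ⟨hsq, a, hsa⟩ := (isAtomOf_iff hZ hq).mp hs
      obtain ⟨hsq₁, hsq₂, -⟩ := strictRel_iff.mp hsq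
      have ha : a ∈ q.1.1 := hsq₁.1 (hsa.ge rfl)
      obtain ⟨a', ha', hab⟩ := s.exists_lt_snd
      rw [hsa, mem_singleton_iff] at ha'
      subst ha'
      refine strictRel_iff.mpr ⟨?_, by rw [ht, ← hq]; exact hsq₂, htbase⟩
      rw [hsa, hA]
      refine ⟨singleton_subset_iff.mpr (Or.inl ⟨ha, hab b (hsq₂ (hq.ge rfl))⟩), fun h => ?_⟩
      exact disjoint_left.mp hKF hk ((mem_singleton_iff.mp (h (Or.inr hk))) ▸ ha)
    have hqt := hmax t ((upDirectedAt_iff hZ t).mpr ⟨b, ht⟩)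
      ((exists_strictRel_iff_hasBase hZ t).mpr htbase) ((compatible_iff hZ hq ht).mpr rfl) hatoms
    rcases hA ▸ fst_subset_of_strFLE hqt hc with h | h
    exacts [hcb h.2, disjoint_left.mp hKF h hc]
  · rintro ⟨b, hq, hbase, hlt⟩
    refine ⟨(exists_strictRel_iff_hasBase hZ q).mpr hbase, (upDirectedAt_iff hZ q).mpr ⟨b, hq⟩,
      fun t ht htmin hqt hatoms => ?_⟩
    obtain ⟨b', ht'⟩ := (upDirectedAt_iff hZ t).mp ht
    obtain rfl := (compatible_iff hZ hq ht').mp hqt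
    -- each `a ∈ q.1.1` yields the atom `({a}, {b})` of `q`
    have hsub : q.1.1 ⊆ t.1.1 := fun a ha => by
      let s : StrF Z := ⟨({a}, {b}), strFMem_of_lt
        (singleton_subset_iff.mpr (q.fst_subset_level ha)) (hq ▸ q.snd_subset_level)
        (finite_singleton a) (finite_singleton b) (singleton_nonempty b) rfl
        fun d hd => (mem_singleton_iff.mp hd) ▸ hlt a ha⟩
      have hs : IsAtomOf strFLE q s := (isAtomOf_iff hZ hq).mpr
        ⟨strictRel_iff.mpr ⟨hbase.singleton_ssubset hZ ha, hq.subset, hbase⟩, a, rfl⟩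
      exact (strictRel_iff.mp (hatoms s hs)).1.1 rfl
    rcases hsub.eq_or_ssubset with h | h
    · exact strFLE_iff.mpr (Or.inl (Subtype.ext (Prod.ext h (hq.trans ht'.symm))))
    · exact strFLE_iff.mpr
        (Or.inr ⟨h, (ht'.trans hq.symm).subset, (exists_strictRel_iff_hasBase hZ t).mp htmin⟩)

end StrF

namespace StrF

variable {Z : Type*} [PartialOrder Z]

lemma exists_common_strictRel_iff (hZ : IsJPoset Z) {P Q R : StrF Z} (hP : P.IsPeak)
    (hQ : Q.IsPeak) (hR : R.IsPeak) :
    (∃ r, StrictRel strFLE r P ∧ StrictRel strFLE r Q ∧ StrictRel strFLE r R) ↔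
      (P.1.1 ∩ Q.1.1 ∩ R.1.1).Nonempty := by
  constructor
  · rintro ⟨r, hrP, hrQ, hrR⟩
    obtain ⟨a, ha⟩ := r.fst_nonempty
    exact ⟨a, ⟨(strictRel_iff.mp hrP).1.1 ha, (strictRel_iff.mp hrQ).1.1 ha⟩,
      (strictRel_iff.mp hrR).1.1 ha⟩
  · rintro ⟨z, ⟨hzP, hzQ⟩, hzR⟩
    obtain ⟨bP, hPb, hPbase, hPlt⟩ := (isPeak_iff hZ P).mp hP
    obtain ⟨bQ, hQb, hQbase, hQlt⟩ := (isPeak_iff hZ Q).mp hQ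
    obtain ⟨bR, hRb, hRbase, hRlt⟩ := (isPeak_iff hZ R).mp hR
    have level_two : ∀ {T : StrF Z} {b}, T.1.2 = {b} → b ∈ level Z 2 := fun {T} _ hT =>
      T.snd_subset_level (hT.ge rfl)
    let r : StrF Z := ⟨({z}, {bP, bQ, bR}), strFMem_of_lt
      (singleton_subset_iff.mpr (P.fst_subset_level hzP))
      (by rintro d (rfl | rfl | rfl); exacts [level_two hPb, level_two hQb, level_two hRb])
      (finite_singleton z) (toFinite _) (insert_nonempty _ _) rfl
      (by rintro d (rfl | rfl | rfl); exacts [hPlt z hzP, hQlt z hzQ, hRlt z hzR])⟩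
    have below : ∀ {T : StrF Z} {b}, T.1.2 = {b} → T.HasBase → z ∈ T.1.1 → b ∈ r.1.2 →
        StrictRel strFLE r T := fun hT hbase hz hb =>
      strictRel_iff.mpr ⟨hbase.singleton_ssubset hZ hz, hT ▸ singleton_subset_iff.mpr hb, hbase⟩
    exact ⟨r, below hPb hPbase hzP (by simp [r]), below hQb hQbase hzQ (by simp [r]),
      below hRb hRbase hzR (by simp [r])⟩

variable {Y : Type*} [PartialOrder Y] {ψ : StrF Z → StrF Y}

lemma isPeak_iff_of_surjective (hZ : IsJPoset Z) (hY : IsJPoset Y)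
    (hsurj : Function.Surjective ψ) (hψ : ∀ p q, strFLE p q ↔ strFLE (ψ p) (ψ q)) (p : StrF Z) :
    p.IsPeak ↔ (ψ p).IsPeak := by
  rw [← isPeakLike_iff_isPeak hZ, ← isPeakLike_iff_isPeak hY]
  exact isPeakLike_iff_of_surjective hsurj hψ p

lemma inter_nonempty_iff_of_surjective (hZ : IsJPoset Z) (hY : IsJPoset Y)
    (hsurj : Function.Surjective ψ) (hψ : ∀ p q, strFLE p q ↔ strFLE (ψ p) (ψ q))
    {P Q R : StrF Z} (hP : P.IsPeak) (hQ : Q.IsPeak) (hR : R.IsPeak) :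
    (P.1.1 ∩ Q.1.1 ∩ R.1.1).Nonempty ↔ ((ψ P).1.1 ∩ (ψ Q).1.1 ∩ (ψ R).1.1).Nonempty := by
  have hpeak := isPeak_iff_of_surjective hZ hY hsurj hψ
  rw [← exists_common_strictRel_iff hZ hP hQ hR, ← exists_common_strictRel_iff hY
    ((hpeak P).mp hP) ((hpeak Q).mp hQ) ((hpeak R).mp hR), hsurj.exists]
  simp only [strictRel_iff_of_forall_iff hψ]

lemma exists_isPeak_mem (hZ : IsJPoset Z) {x : Z} (hx : x ∈ level Z 1) {F : Set Z}
    (hF : F ⊆ level Z 1) (hFfin : F.Finite) :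
    ∃ p : StrF Z, p.IsPeak ∧ x ∈ p.1.1 ∧ p.1.1 ∩ F ⊆ {x} := by
  obtain ⟨b, hxb⟩ := (hZ.j2 x hx).nonempty
  obtain ⟨p, hp, hbase, K, hA, -, hKF, hKb⟩ := exists_union_hasBase hZ
    (singleton_subset_iff.mpr hx) (finite_singleton x) (mem_level_two_of_lt hZ.dim2.le hx hxb)
    hF hFfin
  refine ⟨p, (isPeak_iff hZ p).mpr ⟨b, hp, hbase, ?_⟩, hA ▸ Or.inl rfl, ?_⟩ <;> rw [hA]
  · rintro a (rfl | ha)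
    exacts [hxb, hKb a ha]
  · rintro a ⟨rfl | ha, haF⟩
    exacts [rfl, absurd haF (disjoint_left.mp hKF ha)]

lemma eq_of_KSet_eq (hZ : IsJPoset Z) {y y' : Z} (hy : y ∈ level Z 1) (hy' : y' ∈ level Z 1)
    (h : KSet Z y = KSet Z y') : y = y' := by
  obtain ⟨p, hp, hyp, hpy'⟩ :=
    exists_isPeak_mem hZ hy (singleton_subset_iff.mpr hy') (finite_singleton y')
  have hp' : p ∈ KSet Z y' := h ▸ ⟨hyp, hp⟩
  exact (hpy' ⟨hp'.1, rfl⟩).symm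

lemma exists_isPeak_disjoint (hZ : IsJPoset Z) {y y' : Z} (hy : y ∈ level Z 1)
    (hy' : y' ∈ level Z 1) (hne : y ≠ y') :
    ∃ P Q : StrF Z, P.IsPeak ∧ Q.IsPeak ∧ y ∈ P.1.1 ∧ y' ∈ Q.1.1 ∧ Disjoint P.1.1 Q.1.1 := by
  obtain ⟨P, hP, hyP, hPy'⟩ :=
    exists_isPeak_mem hZ hy (singleton_subset_iff.mpr hy') (finite_singleton y')
  obtain ⟨Q, hQ, hyQ, hQP⟩ := exists_isPeak_mem hZ hy' P.fst_subset_level P.fst_finite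
  refine ⟨P, Q, hP, hQ, hyP, hyQ, disjoint_left.mpr fun a haP haQ => ?_⟩
  obtain rfl : a = y' := hQP ⟨haQ, haP⟩
  exact hne (hPy' ⟨haP, rfl⟩).symm

lemma image_KSet_eq (hZ : IsJPoset Z) (hY : IsJPoset Y) (hsurj : Function.Surjective ψ)
    (hψ : ∀ p q, strFLE p q ↔ strFLE (ψ p) (ψ q)) {x : Z} {p₀ p₁ : StrF Z}
    (hp₀ : p₀.IsPeak) (hp₁ : p₁.IsPeak) (h : p₀.1.1 ∩ p₁.1.1 = {x}) :
    ψ '' KSet Z x = {P | P.IsPeak ∧ (P.1.1 ∩ ((ψ p₀).1.1 ∩ (ψ p₁).1.1)).Nonempty} := by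
  ext P'
  obtain ⟨P, rfl⟩ := hsurj P'
  rw [(injective_of_forall_strFLE_iff hψ).mem_set_image, mem_KSet_iff, mem_ofPred_eq,
    ← isPeak_iff_of_surjective hZ hY hsurj hψ, and_comm]
  refine and_congr_right fun hP => ?_
  rw [← inter_assoc, ← inter_nonempty_iff_of_surjective hZ hY hsurj hψ hP hp₀ hp₁,
    inter_assoc, h, inter_singleton_nonempty]

end StrF

open StrF

/-- If `ψ : Str_F X → Str_F Y` is an isomorphism and `x ∈ X₁`, then there is a
unique `y ∈ Y₁` such that `ψ(K_{Str_F X}(x)) = K_{Str_F Y}(y)`. -/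
theorem stmt_18 {X Y : Type*} [PartialOrder X] [PartialOrder Y]
    (hX : IsJPoset X) (hY : IsJPoset Y)
    (ψ : StrF X → StrF Y) (hψsurj : Function.Surjective ψ)
    (hψord : ∀ p q : StrF X, strFLE p q ↔ strFLE (ψ p) (ψ q))
    (x : X) (hx : x ∈ level X 1) :
    ∃! y : Y, y ∈ level Y 1 ∧ ψ '' KSet X x = KSet Y y := by
  obtain ⟨p₀, hp₀, hxp₀, -⟩ := exists_isPeak_mem hX hx (empty_subset _) finite_empty
  obtain ⟨p₁, hp₁, hxp₁, hp₁p₀⟩ := exists_isPeak_mem hX hx p₀.fst_subset_level p₀.fst_finite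
  have h01 : p₀.1.1 ∩ p₁.1.1 = {x} :=
    subset_antisymm (inter_comm _ _ ▸ hp₁p₀) (singleton_subset_iff.mpr ⟨hxp₀, hxp₁⟩)
  have hmeet {P Q R : StrF X} (hP : P.IsPeak) (hQ : Q.IsPeak) (hR : R.IsPeak) :=
    inter_nonempty_iff_of_surjective hX hY hψsurj hψord hP hQ hR
  have himage := image_KSet_eq hX hY hψsurj hψord hp₀ hp₁ h01
  set S := (ψ p₀).1.1 ∩ (ψ p₁).1.1
  -- members of the image pairwise meet, since their preimages share `x`
  have hpair : ∀ P ∈ ψ '' KSet X x, ∀ Q ∈ ψ '' KSet X x, (P.1.1 ∩ Q.1.1).Nonempty := by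
    rintro _ ⟨P, ⟨hxP, hP⟩, rfl⟩ _ ⟨Q, ⟨hxQ, hQ⟩, rfl⟩
    exact ((hmeet hP hQ hQ).mp ⟨x, ⟨hxP, hxQ⟩, hxQ⟩).mono inter_subset_left
  obtain ⟨y, hy⟩ : S.Nonempty :=
    ((hmeet hp₀ hp₁ hp₁).mp ⟨x, ⟨hxp₀, hxp₁⟩, hxp₁⟩).mono inter_subset_left
  have hyl : y ∈ level Y 1 := (ψ p₀).fst_subset_level hy.1
  have hS : S = {y} := by
    refine eq_singleton_iff_unique_mem.mpr ⟨hy, fun y' hy' => by_contra fun hne => ?_⟩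
    obtain ⟨P, Q, hP, hQ, hy'P, hyQ, hPQ⟩ :=
      exists_isPeak_disjoint hY ((ψ p₀).fst_subset_level hy'.1) hyl hne
    exact not_nonempty_iff_eq_empty.mpr hPQ.inter_eq
      (hpair P (himage ▸ ⟨hP, y', hy'P, hy'⟩) Q (himage ▸ ⟨hQ, y, hyQ, hy⟩))
  have hK : ψ '' KSet X x = KSet Y y := by
    ext P
    rw [himage, hS, mem_ofPred_eq, inter_singleton_nonempty, mem_KSet_iff, and_comm]
  exact ⟨y, ⟨hyl, hK⟩, fun y' ⟨hy', h⟩ => eq_of_KSet_eq hY hy' hyl (h.symm.trans hK)⟩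
end
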